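/- arXiv:2510.06497 — 3 statements merged into one kernel-verified Lean document; each statement's English description precedes it below -/
import Mathlib

section
/- Every Γ-graded-Boolean inverse ∧-semigroup S is separative: for all s, t ∈ S, s ≤ t if and only if s → t, where s → t means that every nonzero r ≤ s satisfies r ∧ t ≠ 0. -/
/-- An element is idempotent. -/
def IsIdemE {S : Type*} [Mul S] (e : S) : Prop := e * e = e

/-- `S` is an inverse semigroup with zero, `inv` giving the unique inverse of each element. -/
structure IsInvSemigroupZ (S : Type*) [Semigroup S] [Zero S] (inv : S → S) : Prop where
  zero_mul : ∀ s : S, 0 * s = 0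
  mul_zero : ∀ s : S, s * 0 = 0
  mul_inv_mul : ∀ s : S, s * inv s * s = s
  inv_mul_inv : ∀ s : S, inv s * s * inv s = inv s
  inv_unique : ∀ s t : S, s * t * s = s → t * s * t = t → t = inv s

/-- The natural partial order on an inverse semigroup: `s ≤ t` iff `s = t * u` for an idempotent `u`. -/
def natle {S : Type*} [Semigroup S] (s t : S) : Prop := ∃ u : S, IsIdemE u ∧ s = t * u

/-- A `Γ`-grading on `S` (the value of `deg` at `0` is irrelevant). -/
def IsGradingZ {S : Type*} [Semigroup S] [Zero S] {Γ : Type*} [Group Γ] (deg : S → Γ) : Prop :=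
  ∀ s t : S, s * t ≠ 0 → deg (s * t) = deg s * deg t

/-- Membership in the component `S_α = deg⁻¹(α) ∪ {0}`. -/
def memGradeZ {S : Type*} [Zero S] {Γ : Type*} (deg : S → Γ) (α : Γ) (s : S) : Prop :=
  s = 0 ∨ deg s = α

/-- `s` and `t` are compatible: `s⁻¹t` and `st⁻¹` are idempotent. -/
def CompatZ {S : Type*} [Semigroup S] (inv : S → S) (s t : S) : Prop :=
  IsIdemE (inv s * t) ∧ IsIdemE (s * inv t)

/-- `s` and `t` are orthogonal: `s⁻¹t = 0 = st⁻¹`. -/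
def OrthogZ {S : Type*} [Semigroup S] [Zero S] (inv : S → S) (s t : S) : Prop :=
  inv s * t = 0 ∧ s * inv t = 0

/-- `j` is the join (least upper bound) of `A` in the natural partial order. -/
def IsJoinZ {S : Type*} [Semigroup S] (A : Set S) (j : S) : Prop :=
  (∀ a ∈ A, natle a j) ∧ ∀ b : S, (∀ a ∈ A, natle a b) → natle j b

/-- `m` is the meet (greatest lower bound) of `A` in the natural partial order. -/
def IsMeetZ {S : Type*} [Semigroup S] (A : Set S) (m : S) : Prop :=
  (∀ a ∈ A, natle m a) ∧ ∀ b : S, (∀ a ∈ A, natle b a) → natle b m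

/-- A filter on `S` with respect to the natural partial order. -/
structure IsFilterZ {S : Type*} [Semigroup S] [Zero S] (X : Set S) : Prop where
  nonempty : X.Nonempty
  directed : ∀ x ∈ X, ∀ y ∈ X, ∃ z ∈ X, natle z x ∧ natle z y
  upward : ∀ x ∈ X, ∀ y : S, natle x y → y ∈ X
  zero_not_mem : (0 : S) ∉ X

/-- An ultrafilter on `S`: a maximal filter. -/
def IsUltraZ {S : Type*} [Semigroup S] [Zero S] (X : Set S) : Prop :=
  IsFilterZ X ∧ ∀ Y : Set S, IsFilterZ Y → X ⊆ Y → Y = X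

/-- The upward closure of a subset. -/
def upsetZ {S : Type*} [Semigroup S] (Y : Set S) : Set S := {x : S | ∃ y ∈ Y, natle y x}

/-- The set of ultrafilters on `S` containing `s`. -/
def USetZ {S : Type*} [Semigroup S] [Zero S] (s : S) : Set (Set S) :=
  {X : Set S | IsUltraZ X ∧ s ∈ X}

/-- `S` is a `Γ`-graded-Boolean inverse ∧-semigroup, with meet operation `meet`. -/
structure IsGradedBooleanZ {S : Type*} [Semigroup S] [Zero S] {Γ : Type*} [Group Γ]
    (inv : S → S) (deg : S → Γ) (meet : S → S → S) : Prop where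
  invSemi : IsInvSemigroupZ S inv
  grading : IsGradingZ deg
  meet_is : ∀ s t : S, IsMeetZ {s, t} (meet s t)
  joins : ∀ (α : Γ) (A : Finset S), A.Nonempty →
    (∀ a ∈ A, memGradeZ deg α a) → (∀ a ∈ A, ∀ b ∈ A, CompatZ inv a b) →
    ∃ j : S, IsJoinZ (↑A) j
  mul_join_left : ∀ (α : Γ) (A : Finset S), A.Nonempty →
    (∀ a ∈ A, memGradeZ deg α a) → (∀ a ∈ A, ∀ b ∈ A, CompatZ inv a b) →
    ∀ s j : S, IsJoinZ (↑A) j → IsJoinZ ((fun a => s * a) '' ↑A) (s * j)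
  mul_join_right : ∀ (α : Γ) (A : Finset S), A.Nonempty →
    (∀ a ∈ A, memGradeZ deg α a) → (∀ a ∈ A, ∀ b ∈ A, CompatZ inv a b) →
    ∀ s j : S, IsJoinZ (↑A) j → IsJoinZ ((fun a => a * s) '' ↑A) (j * s)
  idem_joins : ∀ e f : S, IsIdemE e → IsIdemE f → ∃ j : S, IsIdemE j ∧ IsJoinZ {e, f} j
  distrib : ∀ e f g j : S, IsIdemE e → IsIdemE f → IsIdemE g →
    IsJoinZ {f, g} j → IsJoinZ {e * f, e * g} (e * j)
  complemented : ∀ e f : S, IsIdemE e → IsIdemE f → natle f e →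
    ∃ g : S, IsIdemE g ∧ natle g e ∧ f * g = 0 ∧ IsJoinZ {f, g} e

section
variable {S : Type*} [Semigroup S] [Zero S] {inv : S → S} (hI : IsInvSemigroupZ S inv)

omit [Zero S] in
lemma my_dup {e : S} (he : IsIdemE e) : ∀ x : S, e * (e * x) = e * x := by
  intro x; rw [← mul_assoc, he]

include hI

lemma my_inv_inv (s : S) : inv (inv s) = s :=
  (hI.inv_unique (inv s) s (hI.inv_mul_inv s) (hI.mul_inv_mul s)).symm

lemma my_inv_idem {e : S} (he : IsIdemE e) : inv e = e :=
  (hI.inv_unique e e (by rw [he, he]) (by rw [he, he])).symm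

lemma my_idem_mul {e f : S} (he : IsIdemE e) (hf : IsIdemE f) : IsIdemE (e * f) := by
  have h2' : ∀ y : S, inv (e*f) * (e * (f * (inv (e*f) * y))) = inv (e*f) * y := by
    intro y
    have : inv (e*f) * (e*f) * inv (e*f) * y = inv (e*f) * y := by
      rw [hI.inv_mul_inv]
    simpa only [mul_assoc] using this
  have hA : f * inv (e*f) * e = inv (e * f) := by
    apply hI.inv_unique
    · have base : e * f * inv (e*f) * (e*f) = e * f := hI.mul_inv_mul (e*f)
      simp only [mul_assoc] at base ⊢
      rw [my_dup hf, my_dup he]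
      exact base
    · simp only [mul_assoc]
      rw [my_dup he, my_dup hf, h2']
  have hxx : IsIdemE (inv (e*f)) := by
    show inv (e*f) * inv (e*f) = inv (e*f)
    conv_lhs => rw [← hA]
    simp only [mul_assoc]
    rw [h2', ← mul_assoc]
    exact hA
  have hef : e * f = inv (e*f) := by
    nth_rewrite 1 [← my_inv_inv hI (e*f)]
    exact my_inv_idem hI hxx
  rw [hef]; exact hxx

lemma my_idem_comm {e f : S} (he : IsIdemE e) (hf : IsIdemE f) : e * f = f * e := by
  have hef := my_idem_mul hI he hf
  have hfe := my_idem_mul hI hf he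
  have : f * e = inv (e * f) := by
    apply hI.inv_unique
    · have base : e * f * (e * f) = e * f := hef
      simp only [mul_assoc] at base ⊢
      rw [my_dup hf, my_dup he]
      exact base
    · have base : f * e * (f * e) = f * e := hfe
      simp only [mul_assoc] at base ⊢
      rw [my_dup he, my_dup hf]
      exact base
  rw [this, my_inv_idem hI hef]

lemma my_idem_inv_mul (s : S) : IsIdemE (inv s * s) := by
  show inv s * s * (inv s * s) = inv s * s
  calc inv s * s * (inv s * s) = (inv s * s * inv s) * s := by simp only [mul_assoc]
    _ = inv s * s := by rw [hI.inv_mul_inv]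

lemma my_natle_refl (s : S) : natle s s :=
  ⟨inv s * s, my_idem_inv_mul hI s, by rw [← mul_assoc, hI.mul_inv_mul]⟩

lemma my_natle_trans {a b c : S} (h1 : natle a b) (h2 : natle b c) : natle a c := by
  obtain ⟨u, hu, rfl⟩ := h1
  obtain ⟨v, hv, rfl⟩ := h2
  exact ⟨v * u, my_idem_mul hI hv hu, by simp only [mul_assoc]⟩

lemma my_natle_antisymm {a b : S} (h1 : natle a b) (h2 : natle b a) : a = b := by
  obtain ⟨u, hu, rfl⟩ := h1
  obtain ⟨v, hv, hb⟩ := h2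
  have key : b * u = b := by
    conv_lhs => rw [hb]
    calc b * u * v * u = b * (u * (v * u)) := by simp only [mul_assoc]
      _ = b * (u * (u * v)) := by rw [my_idem_comm hI hv hu]
      _ = b * (u * v) := by rw [my_dup hu]
      _ = b := by rw [← mul_assoc, ← hb]
  exact key

lemma my_zero_idem : IsIdemE (0 : S) := hI.mul_zero 0

lemma my_natle_zero {a : S} (h : natle a (0 : S)) : a = 0 := by
  obtain ⟨u, _, rfl⟩ := h; exact hI.zero_mul u

lemma my_key {s F G x : S} (hF : IsIdemE F) (hG : IsIdemE G) (hFG : F * G = 0)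
    (h1 : x = s * F) (h2 : x = s * G) : x = 0 := by
  have hx : x = s * (inv s * x) := by
    rw [h1, ← mul_assoc, ← mul_assoc, hI.mul_inv_mul]
  have e0 : IsIdemE (inv s * s) := my_idem_inv_mul hI s
  have hinv1 : inv s * x = inv s * s * F := by rw [h1, ← mul_assoc]
  have hinv2 : inv s * x = inv s * s * G := by rw [h2, ← mul_assoc]
  have hidem : IsIdemE (inv s * x) := by rw [hinv1]; exact my_idem_mul hI e0 hF
  have hzero : inv s * x = 0 := by
    have step : inv s * x * (inv s * x) = 0 := by
      nth_rewrite 1 [hinv1]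
      rw [hinv2]
      calc inv s * s * F * (inv s * s * G)
          = inv s * s * (F * (inv s * s)) * G := by simp only [mul_assoc]
        _ = inv s * s * ((inv s * s) * F) * G := by rw [my_idem_comm hI hF e0]
        _ = (inv s * s * (inv s * s)) * (F * G) := by simp only [mul_assoc]
        _ = inv s * s * 0 := by rw [e0, hFG]
        _ = 0 := hI.mul_zero _
    rw [← hidem, step]
  rw [hx, hzero, hI.mul_zero]

end

theorem gradedBoolean_separative
    {S Γ : Type*} [Semigroup S] [Zero S] [Group Γ]
    (inv : S → S) (deg : S → Γ) (meet : S → S → S)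
    (hB : IsGradedBooleanZ inv deg meet) :
    ∀ s t : S, natle s t ↔ (∀ r : S, r ≠ 0 → natle r s → meet r t ≠ 0) := by
  have hI := hB.invSemi
  intro s t
  constructor
  · intro hst r hr hrs
    have hrt : natle r t := my_natle_trans hI hrs hst
    have hrm : natle r (meet r t) := by
      apply (hB.meet_is r t).2 r
      intro a ha
      simp only [Set.mem_insert_iff, Set.mem_singleton_iff] at ha
      rcases ha with rfl | rfl
      · exact my_natle_refl hI _
      · exact hrt
    intro h0
    exact hr (my_natle_zero hI (h0 ▸ hrm))
  · intro H
    have hms : natle (meet s t) s := (hB.meet_is s t).1 s (Set.mem_insert _ _)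
    have hmt : natle (meet s t) t :=
      (hB.meet_is s t).1 t (Set.mem_insert_of_mem _ rfl)
    obtain ⟨u, hu, hmu⟩ := hms
    have e0idem := my_idem_inv_mul hI s
    have hfidem : IsIdemE (inv s * s * u) := my_idem_mul hI e0idem hu
    have hfle : natle (inv s * s * u) (inv s * s) := ⟨u, hu, rfl⟩
    have hsf : s * (inv s * s * u) = meet s t := by
      rw [hmu, ← mul_assoc, ← mul_assoc, hI.mul_inv_mul]
    obtain ⟨g, hgidem, hgle, hfg, hjoin⟩ :=
      hB.complemented (inv s * s) (inv s * s * u) e0idem hfidem hfle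
    have hsg : s * g = 0 := by
      by_contra hne
      have hrle : natle (s * g) s := ⟨g, hgidem, rfl⟩
      apply H (s * g) hne hrle
      have hxr : natle (meet (s * g) t) (s * g) :=
        (hB.meet_is (s * g) t).1 _ (Set.mem_insert _ _)
      have hxt : natle (meet (s * g) t) t :=
        (hB.meet_is (s * g) t).1 t (Set.mem_insert_of_mem _ rfl)
      have hxs : natle (meet (s * g) t) s := my_natle_trans hI hxr hrle
      have hxm : natle (meet (s * g) t) (meet s t) := by
        apply (hB.meet_is s t).2
        intro a ha
        simp only [Set.mem_insert_iff, Set.mem_singleton_iff] at ha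
        rcases ha with rfl | rfl
        · exact hxs
        · exact hxt
      obtain ⟨w, hw, hxw⟩ := hxm
      obtain ⟨v, hv, hxv⟩ := hxr
      have hFG : (inv s * s * u * w) * (g * v) = 0 := by
        calc (inv s * s * u * w) * (g * v)
            = inv s * s * u * (w * g) * v := by simp only [mul_assoc]
          _ = inv s * s * u * (g * w) * v := by rw [my_idem_comm hI hw hgidem]
          _ = (inv s * s * u * g) * (w * v) := by simp only [mul_assoc]
          _ = 0 := by rw [hfg, hI.zero_mul]
      refine my_key hI (s := s) (my_idem_mul hI hfidem hw) (my_idem_mul hI hgidem hv) hFG ?_ ?_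
      · rw [hxw, ← hsf, mul_assoc]
      · rw [hxv, mul_assoc]
    obtain ⟨v, hv, hgv⟩ := hgle
    have hg0 : g = 0 := by
      have h1 : inv s * s * g = 0 := by rw [mul_assoc, hsg, hI.mul_zero]
      have h2 : inv s * s * g = g := by
        conv_lhs => rw [hgv]
        rw [my_dup e0idem, ← hgv]
      rw [← h2, h1]
    rw [hg0] at hjoin
    have hle1 : natle (inv s * s) (inv s * s * u) := by
      apply hjoin.2
      intro a ha
      simp only [Set.mem_insert_iff, Set.mem_singleton_iff] at ha
      rcases ha with rfl | rfl
      · exact my_natle_refl hI _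
      · exact ⟨0, my_zero_idem hI, (hI.mul_zero _).symm⟩
    have hfe0 : inv s * s * u = inv s * s := my_natle_antisymm hI hfle hle1
    have hsm : s = meet s t := by
      rw [← hsf, hfe0, ← mul_assoc, hI.mul_inv_mul]
    rw [hsm]
    exact hmt
end

section
/- Let S be a Γ-graded-Boolean inverse ∧-semigroup, and for s ∈ S let 𝒴_s be the set of ultrafilters on S containing s. Then 𝒴_s ⊆ 𝒴_t if and only if s ≤ t, for all s, t ∈ S. -/
section AuxLemmas

variable {S : Type*} [Semigroup S] [Zero S] {inv : S → S}

lemma aux_inv_inv (hI : IsInvSemigroupZ S inv) (s : S) : inv (inv s) = s :=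
  (hI.inv_unique (inv s) s (hI.inv_mul_inv s) (hI.mul_inv_mul s)).symm

lemma aux_idem_inv (hI : IsInvSemigroupZ S inv) {e : S} (he : IsIdemE e) : inv e = e :=
  (hI.inv_unique e e (by rw [he, he]) (by rw [he, he])).symm

lemma aux_idem_mul (hI : IsInvSemigroupZ S inv) {e f : S} (he : IsIdemE e) (hf : IsIdemE f) :
    IsIdemE (e * f) := by
  set x := inv (e * f) with hx
  have hce : ∀ y : S, e * (e * y) = e * y := fun y => by rw [← mul_assoc, he]
  have hcf : ∀ y : S, f * (f * y) = f * y := fun y => by rw [← mul_assoc, hf]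
  have h1 : e * (f * (x * (e * f))) = e * f := by
    have := hI.mul_inv_mul (e * f); rw [← hx] at this
    simpa [mul_assoc] using this
  have h2g : ∀ y : S, x * (e * (f * (x * y))) = x * y := fun y => by
    have := congrArg (· * y) (hI.inv_mul_inv (e * f)); rw [← hx] at this
    simpa [mul_assoc] using this
  have hxeq : f * (x * e) = x := by
    apply hI.inv_unique (e * f) (f * (x * e))
    · simp only [mul_assoc, hce, hcf]; exact h1
    · simp only [mul_assoc, hce, hcf]; rw [h2g e]
  have hxidem : IsIdemE x := by
    show x * x = x
    conv_lhs => rw [← hxeq]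
    rw [show f * (x * e) * (f * (x * e)) = f * (x * (e * (f * (x * e)))) by simp [mul_assoc],
      h2g e, hxeq]
  have hefx : e * f = inv (e * f) := by
    have h := aux_idem_inv hI hxidem
    rw [hx, aux_inv_inv hI] at h
    exact h
  show (e * f) * (e * f) = e * f
  rw [hefx]
  exact hxidem

lemma aux_idem_comm (hI : IsInvSemigroupZ S inv) {e f : S} (he : IsIdemE e) (hf : IsIdemE f) :
    e * f = f * e := by
  have hef := aux_idem_mul hI he hf
  have hfe := aux_idem_mul hI hf he
  have hce : ∀ y : S, e * (e * y) = e * y := fun y => by rw [← mul_assoc, he]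
  have hcf : ∀ y : S, f * (f * y) = f * y := fun y => by rw [← mul_assoc, hf]
  have h : f * e = inv (e * f) := by
    apply hI.inv_unique
    · simp only [mul_assoc, hce, hcf]
      have hef' : e * f * (e * f) = e * f := hef
      simpa [mul_assoc] using hef'
    · simp only [mul_assoc, hce, hcf]
      have hfe' : f * e * (f * e) = f * e := hfe
      simpa [mul_assoc] using hfe' 
  rw [h, aux_idem_inv hI hef]

lemma aux_natle_refl (hI : IsInvSemigroupZ S inv) (s : S) : natle s s := by
  refine ⟨inv s * s, ?_, ?_⟩
  · show inv s * s * (inv s * s) = inv s * s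
    rw [mul_assoc, ← mul_assoc s (inv s) s, hI.mul_inv_mul]
  · rw [← mul_assoc, hI.mul_inv_mul]

lemma aux_natle_trans (hI : IsInvSemigroupZ S inv) {a b c : S}
    (h1 : natle a b) (h2 : natle b c) : natle a c := by
  obtain ⟨u, hu, rfl⟩ := h1
  obtain ⟨v, hv, rfl⟩ := h2
  exact ⟨v * u, aux_idem_mul hI hv hu, by rw [mul_assoc]⟩

lemma aux_natle_antisymm (hI : IsInvSemigroupZ S inv) {a b : S}
    (h1 : natle a b) (h2 : natle b a) : a = b := by
  obtain ⟨u, hu, h1⟩ := h1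
  obtain ⟨v, hv, h2⟩ := h2
  -- a = b * u, b = a * v
  have hab : a = a * (v * u) := by
    rw [← mul_assoc, ← h2, ← h1]
  rw [h2, hab]
  rw [show a * (v * u) * v = a * (v * (u * v)) by simp [mul_assoc]]
  rw [aux_idem_comm hI hu hv, ← mul_assoc v v u, hv]

lemma aux_natle_zero (hI : IsInvSemigroupZ S inv) (t : S) : natle 0 t :=
  ⟨0, hI.mul_zero 0, (hI.mul_zero t).symm⟩

lemma aux_natle_zero_right (hI : IsInvSemigroupZ S inv) {s : S} (h : natle s 0) : s = 0 := by
  obtain ⟨u, _, rfl⟩ := h; exact hI.zero_mul u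

/-- if `x ≤ s` then `inv s * x` is idempotent and `s * (inv s * x) = x`. -/
lemma aux_le_dest (hI : IsInvSemigroupZ S inv) {x s : S} (h : natle x s) :
    IsIdemE (inv s * x) ∧ s * (inv s * x) = x := by
  obtain ⟨u, hu, rfl⟩ := h
  have he : IsIdemE (inv s * s) := by
    show inv s * s * (inv s * s) = inv s * s
    rw [mul_assoc, ← mul_assoc s (inv s) s, hI.mul_inv_mul]
  constructor
  · rw [← mul_assoc]
    exact aux_idem_mul hI he hu
  · rw [← mul_assoc, ← mul_assoc, hI.mul_inv_mul]

lemma aux_principal_filter (hI : IsInvSemigroupZ S inv) {s : S} (hs : s ≠ 0) :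
    IsFilterZ {x : S | natle s x} := by
  refine ⟨⟨s, aux_natle_refl hI s⟩, ?_, ?_, ?_⟩
  · intro x hx y hy
    exact ⟨s, aux_natle_refl hI s, hx, hy⟩
  · intro x hx y hxy
    exact aux_natle_trans hI hx hxy
  · intro h0
    exact hs (aux_natle_zero_right hI h0)

lemma aux_exists_ultra {X : Set S} (hF : IsFilterZ X) :
    ∃ U : Set S, IsUltraZ U ∧ X ⊆ U := by
  have Hc : ∀ c ⊆ {Y : Set S | IsFilterZ Y ∧ X ⊆ Y}, IsChain (· ⊆ ·) c → c.Nonempty →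
      ∃ ub ∈ {Y : Set S | IsFilterZ Y ∧ X ⊆ Y}, ∀ s ∈ c, s ⊆ ub := by
    intro c hcsub hchain hcne
    obtain ⟨Y₀, hY₀⟩ := hcne
    refine ⟨⋃₀ c, ⟨⟨?_, ?_, ?_, ?_⟩, ?_⟩, fun Y hY => Set.subset_sUnion_of_mem hY⟩
    · obtain ⟨y, hy⟩ := (hcsub hY₀).1.nonempty
      exact ⟨y, Y₀, hY₀, hy⟩
    · rintro x ⟨Y₁, hY₁, hx⟩ y ⟨Y₂, hY₂, hy⟩
      rcases hchain.total hY₁ hY₂ with h | h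
      · obtain ⟨z, hz, h1, h2⟩ := (hcsub hY₂).1.directed x (h hx) y hy
        exact ⟨z, ⟨Y₂, hY₂, hz⟩, h1, h2⟩
      · obtain ⟨z, hz, h1, h2⟩ := (hcsub hY₁).1.directed x hx y (h hy)
        exact ⟨z, ⟨Y₁, hY₁, hz⟩, h1, h2⟩
    · rintro x ⟨Y₁, hY₁, hx⟩ y hxy
      exact ⟨Y₁, hY₁, (hcsub hY₁).1.upward x hx y hxy⟩
    · rintro ⟨Y₁, hY₁, h0⟩
      exact (hcsub hY₁).1.zero_not_mem h0
    · exact (hcsub hY₀).2.trans (Set.subset_sUnion_of_mem hY₀)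
  obtain ⟨m, hXm, hm⟩ := zorn_subset_nonempty {Y : Set S | IsFilterZ Y ∧ X ⊆ Y} Hc X ⟨hF, subset_rfl⟩
  refine ⟨m, ⟨hm.prop.1, ?_⟩, hXm⟩
  intro Y hY hmY
  have hYin : Y ∈ {Y : Set S | IsFilterZ Y ∧ X ⊆ Y} := ⟨hY, hXm.trans hmY⟩
  exact Set.Subset.antisymm (hm.le_of_ge hYin hmY) hmY

end AuxLemmas

theorem uset_subset_iff_le
    {S Γ : Type*} [Semigroup S] [Zero S] [Group Γ]
    (inv : S → S) (deg : S → Γ) (meet : S → S → S)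
    (hB : IsGradedBooleanZ inv deg meet)
    (s t : S) :
    USetZ s ⊆ USetZ t ↔ natle s t := by
  have hI := hB.invSemi
  constructor
  · intro hsub
    by_cases hs0 : s = 0
    · subst hs0; exact aux_natle_zero hI t
    by_contra hnle
    -- setup
    have he : IsIdemE (inv s * s) := by
      show inv s * s * (inv s * s) = inv s * s
      rw [mul_assoc, ← mul_assoc s (inv s) s, hI.mul_inv_mul]
    have hse : s * (inv s * s) = s := by rw [← mul_assoc, hI.mul_inv_mul]
    set e := inv s * s with hedef
    set m := meet s t with hmdef
    have hmeet := hB.meet_is s t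
    have hms : natle m s := hmeet.1 s (by left; rfl)
    have hmt : natle m t := hmeet.1 t (by right; rfl)
    obtain ⟨hfidem, hsm⟩ := aux_le_dest hI hms
    set f := inv s * m with hfdef
    have hfe : natle f e := by
      obtain ⟨u, hu, hmu⟩ := hms
      exact ⟨u, hu, by rw [hfdef, hmu, ← mul_assoc]⟩
    obtain ⟨g, hgidem, hge, hfg0, hjoin⟩ := hB.complemented e f he hfidem hfe
    have heg : e * g = g := by
      obtain ⟨u, hu, rfl⟩ := hge
      rw [← mul_assoc, he]
    have hgne : g ≠ 0 := by
      intro hg0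
      subst hg0
      have hef : natle e f := by
        apply hjoin.2 f
        rintro a (rfl | rfl)
        · exact aux_natle_refl hI f
        · exact aux_natle_zero hI f
      have : e = f := aux_natle_antisymm hI hef hfe
      have hsf : s = m := by
        rw [← hsm, ← this, hse]
      exact hnle (hsf ▸ hmt)
    have hsgne : s * g ≠ 0 := by
      intro h0
      apply hgne
      rw [← heg, hedef, mul_assoc, h0, hI.mul_zero]
    -- build an ultrafilter containing s*g
    obtain ⟨U, hU, hsubU⟩ := aux_exists_ultra (aux_principal_filter hI hsgne)
    have hsgU : s * g ∈ U := hsubU (aux_natle_refl hI (s * g))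
    have hsU : s ∈ U := hU.1.upward (s * g) hsgU s ⟨g, hgidem, rfl⟩
    have hUs : U ∈ USetZ s := ⟨hU, hsU⟩
    have htU : t ∈ U := (hsub hUs).2
    have hmU : m ∈ U := by
      obtain ⟨z, hzU, hzs, hzt⟩ := hU.1.directed s hsU t htU
      refine hU.1.upward z hzU m (hmeet.2 z ?_)
      rintro a (rfl | rfl)
      · exact hzs
      · exact hzt
    obtain ⟨x, hxU, hxm, hxsg⟩ := hU.1.directed m hmU (s * g) hsgU
    -- show x = 0
    obtain ⟨w, hw, hxw⟩ := hxm
    obtain ⟨v, hv, hxv⟩ := hxsg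
    have h1 : inv s * x = f * w := by rw [hxw, ← mul_assoc, ← hfdef]
    have h2 : inv s * x = g * v := by
      rw [hxv, ← mul_assoc, ← mul_assoc, ← hedef, heg]
    have hpidem : IsIdemE (inv s * x) := by
      rw [h1]; exact aux_idem_mul hI hfidem hw
    have hp0 : inv s * x = 0 := by
      have hkey : inv s * x * (inv s * x) = inv s * x := hpidem
      nth_rewrite 1 [h1] at hkey
      nth_rewrite 1 [h2] at hkey
      rw [← hkey, show f * w * (g * v) = f * (w * g) * v by simp [mul_assoc],
        aux_idem_comm hI hw hgidem,
        show f * (g * w) * v = f * g * (w * v) by simp [mul_assoc],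
        hfg0, hI.zero_mul]
    have hx0 : x = 0 := by
      have hxs : natle x s := aux_natle_trans hI ⟨w, hw, hxw⟩ hms
      have := (aux_le_dest hI hxs).2
      rw [hp0, hI.mul_zero] at this
      exact this.symm
    exact hU.1.zero_not_mem (hx0 ▸ hxU)
  · intro hle X hX
    exact ⟨hX.1, hX.1.1.upward s hX.2 t hle⟩
end

section
/- Let S be a Γ-graded-Boolean inverse ∧-semigroup and let u, v_i ∈ E(S) (i ∈ I) be idempotents such that 𝒴_u = ⋃_{i∈I} 𝒴_{v_i}, where 𝒴_e denotes the set of ultrafilters on S containing e. Then there exists a finite subset J ⊆ I with 𝒴_u = ⋃_{i∈J} 𝒴_{v_i}. -/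
/-!
For each `i` let `c i` be the complement of `u * v i` below `u`; since ultrafilters are prime on
joins of idempotents, an ultrafilter containing `u` contains `v i` exactly when it misses `c i`.
If some finite product `u * c i₁ * ⋯ * c iₙ` vanishes, the indices `i₁, …, iₙ` give the subcover;
otherwise these products generate a proper filter, and an ultrafilter extending it contains `u`
but no `v i`, contradicting the hypothesis.
-/

section Order

variable {S : Type*} [Semigroup S] {meet : S → S → S}

theorem meet_natle_left (hM : ∀ s t : S, IsMeetZ {s, t} (meet s t)) (s t : S) :
    natle (meet s t) s :=
  (hM s t).1 s (Set.mem_insert _ _)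

theorem meet_natle_right (hM : ∀ s t : S, IsMeetZ {s, t} (meet s t)) (s t : S) :
    natle (meet s t) t :=
  (hM s t).1 t (Set.mem_insert_of_mem _ rfl)

theorem natle_meet (hM : ∀ s t : S, IsMeetZ {s, t} (meet s t)) {s t z : S}
    (hs : natle z s) (ht : natle z t) : natle z (meet s t) :=
  (hM s t).2 z (by rintro a (rfl | rfl) <;> assumption)

theorem natle_mul_right (s : S) {f : S} (hf : IsIdemE f) : natle (s * f) s := ⟨f, hf, rfl⟩

theorem mul_eq_of_natle {e z : S} (he : IsIdemE e) (h : natle z e) : e * z = z := by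
  obtain ⟨w, -, rfl⟩ := h
  rw [← mul_assoc, he]

variable [Zero S]

theorem isFilterZ_sUnion {C : Set (Set S)} (hC : ∀ Y ∈ C, IsFilterZ Y)
    (hchain : IsChain (· ⊆ ·) C) (hne : C.Nonempty) : IsFilterZ (⋃₀ C) where
  nonempty := by
    obtain ⟨Y, hY⟩ := hne
    obtain ⟨x, hx⟩ := (hC Y hY).nonempty
    exact ⟨x, Y, hY, hx⟩
  directed := by
    rintro x ⟨Y₁, hY₁, hx⟩ y ⟨Y₂, hY₂, hy⟩
    rcases hchain.total hY₁ hY₂ with h₁₂ | h₂₁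
    · obtain ⟨z, hz, hzx, hzy⟩ := (hC Y₂ hY₂).directed x (h₁₂ hx) y hy
      exact ⟨z, ⟨Y₂, hY₂, hz⟩, hzx, hzy⟩
    · obtain ⟨z, hz, hzx, hzy⟩ := (hC Y₁ hY₁).directed x hx y (h₂₁ hy)
      exact ⟨z, ⟨Y₁, hY₁, hz⟩, hzx, hzy⟩
  upward := by
    rintro x ⟨Y, hY, hx⟩ y hxy
    exact ⟨Y, hY, (hC Y hY).upward x hx y hxy⟩
  zero_not_mem := by
    rintro ⟨Y, hY, h0⟩
    exact (hC Y hY).zero_not_mem h0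

theorem exists_isUltraZ_superset {F : Set S} (hF : IsFilterZ F) :
    ∃ X : Set S, IsUltraZ X ∧ F ⊆ X := by
  obtain ⟨X, hFX, hX⟩ := zorn_subset_nonempty {Y : Set S | IsFilterZ Y ∧ F ⊆ Y}
    (fun C hC hchain hne => ⟨⋃₀ C,
      ⟨isFilterZ_sUnion (fun Y hY => (hC hY).1) hchain hne,
        (hC hne.some_mem).2.trans (Set.subset_sUnion_of_mem hne.some_mem)⟩,
      fun _ => Set.subset_sUnion_of_mem⟩) F ⟨hF, subset_rfl⟩
  exact ⟨X, ⟨hX.prop.1, fun Y hY hXY => hX.eq_of_ge ⟨hY, hFX.trans hXY⟩ hXY⟩, hX.prop.2⟩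

end Order

section InverseSemigroup

variable {S : Type*} [Semigroup S] [Zero S] {inv : S → S}

theorem inv_eq_self_of_isIdemE (hS : IsInvSemigroupZ S inv) {e : S} (he : IsIdemE e) :
    inv e = e :=
  (hS.inv_unique e e (by rw [he, he]) (by rw [he, he])).symm

/-- With `x = (ef)⁻¹`, both `xe` and `fx` are inverses of `ef`, so `x = xe = fx` is idempotent,
and then so is its inverse `ef`. -/
theorem isIdemE_mul (hS : IsInvSemigroupZ S inv) {e f : S} (he : IsIdemE e) (hf : IsIdemE f) :
    IsIdemE (e * f) := by
  set x := inv (e * f)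
  have he' : ∀ y : S, e * (e * y) = e * y := fun y => by rw [← mul_assoc, he]
  have hf' : ∀ y : S, f * (f * y) = f * y := fun y => by rw [← mul_assoc, hf]
  have h₁ : e * (f * (x * (e * f))) = e * f := by
    simpa only [mul_assoc] using hS.mul_inv_mul (e * f)
  have h₂ : ∀ y : S, x * (e * (f * (x * y))) = x * y := fun y => by
    simpa only [mul_assoc] using congrArg (· * y) (hS.inv_mul_inv (e * f))
  have hxe : x * e = x := hS.inv_unique (e * f) (x * e)
    (by simp only [mul_assoc, he']; exact h₁) (by simp only [mul_assoc, he']; exact h₂ e)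
  have hfx : f * x = x := hS.inv_unique (e * f) (f * x)
    (by simp only [mul_assoc, hf']; exact h₁)
    (by simpa only [mul_assoc, hf', he'] using congrArg (f * ·) (hS.inv_mul_inv (e * f)))
  have hx : IsIdemE x := by
    show x * x = x
    calc x * x = x * e * (f * x) := by rw [hxe, hfx]
      _ = x := by simpa only [mul_assoc] using hS.inv_mul_inv (e * f)
  have hef : e * f = inv x := hS.inv_unique x (e * f) (hS.inv_mul_inv _) (hS.mul_inv_mul _)
  rw [hef, inv_eq_self_of_isIdemE hS hx]
  exact hx

theorem mul_comm_of_isIdemE (hS : IsInvSemigroupZ S inv) {e f : S} (he : IsIdemE e)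
    (hf : IsIdemE f) : e * f = f * e := by
  have he' : ∀ y : S, e * (e * y) = e * y := fun y => by rw [← mul_assoc, he]
  have hf' : ∀ y : S, f * (f * y) = f * y := fun y => by rw [← mul_assoc, hf]
  have hef : e * (f * (e * f)) = e * f := by
    simpa only [IsIdemE, mul_assoc] using isIdemE_mul hS he hf
  have hfe : f * (e * (f * e)) = f * e := by
    simpa only [IsIdemE, mul_assoc] using isIdemE_mul hS hf he
  have h := hS.inv_unique (e * f) (f * e)
    (by simp only [mul_assoc, he', hf']; exact hef) (by simp only [mul_assoc, he', hf']; exact hfe)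
  rw [h, inv_eq_self_of_isIdemE hS (isIdemE_mul hS he hf)]

theorem natle_refl (hS : IsInvSemigroupZ S inv) (s : S) : natle s s :=
  ⟨inv s * s, by rw [IsIdemE, ← mul_assoc, hS.inv_mul_inv], by rw [← mul_assoc, hS.mul_inv_mul]⟩

theorem natle_trans (hS : IsInvSemigroupZ S inv) {a b c : S} (hab : natle a b)
    (hbc : natle b c) : natle a c := by
  obtain ⟨u, hu, rfl⟩ := hab
  obtain ⟨w, hw, rfl⟩ := hbc
  exact ⟨w * u, isIdemE_mul hS hw hu, mul_assoc c w u⟩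

theorem eq_zero_of_natle_zero (hS : IsInvSemigroupZ S inv) {s : S} (h : natle s 0) : s = 0 := by
  obtain ⟨u, -, rfl⟩ := h
  exact hS.zero_mul u

theorem isIdemE_of_natle (hS : IsInvSemigroupZ S inv) {e z : S} (he : IsIdemE e)
    (h : natle z e) : IsIdemE z := by
  obtain ⟨u, hu, rfl⟩ := h
  exact isIdemE_mul hS he hu

theorem mul_natle_of_isIdemE (hS : IsInvSemigroupZ S inv) {e f : S} (he : IsIdemE e)
    (hf : IsIdemE f) : natle (e * f) f := by
  rw [mul_comm_of_isIdemE hS he hf]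
  exact natle_mul_right f he

theorem natle_mul_iff (hS : IsInvSemigroupZ S inv) {e f z : S} (he : IsIdemE e)
    (hf : IsIdemE f) : natle z (e * f) ↔ natle z e ∧ natle z f := by
  refine ⟨fun h => ⟨natle_trans hS h (natle_mul_right e hf),
    natle_trans hS h (mul_natle_of_isIdemE hS he hf)⟩, fun ⟨hze, hzf⟩ => ?_⟩
  refine ⟨z, isIdemE_of_natle hS he hze, ?_⟩
  rw [mul_assoc, mul_eq_of_natle hf hzf, mul_eq_of_natle he hze]

theorem IsFilterZ.mul_mem (hS : IsInvSemigroupZ S inv) {X : Set S} (hX : IsFilterZ X) {e f : S}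
    (he : IsIdemE e) (hf : IsIdemE f) (heX : e ∈ X) (hfX : f ∈ X) : e * f ∈ X := by
  obtain ⟨z, hz, hze, hzf⟩ := hX.directed e heX f hfX
  exact hX.upward z hz _ ((natle_mul_iff hS he hf).2 ⟨hze, hzf⟩)

theorem IsFilterZ.mul_mem_iff (hS : IsInvSemigroupZ S inv) {X : Set S} (hX : IsFilterZ X)
    {e f : S} (he : IsIdemE e) (hf : IsIdemE f) : e * f ∈ X ↔ e ∈ X ∧ f ∈ X :=
  ⟨fun h => ⟨hX.upward _ h e (natle_mul_right e hf),
    hX.upward _ h f (mul_natle_of_isIdemE hS he hf)⟩, fun h => hX.mul_mem hS he hf h.1 h.2⟩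

theorem isFilterZ_upsetZ (hS : IsInvSemigroupZ S inv) {B : Set S} (hne : B.Nonempty)
    (hdir : ∀ a ∈ B, ∀ b ∈ B, ∃ d ∈ B, natle d a ∧ natle d b) (h0 : (0 : S) ∉ B) :
    IsFilterZ (upsetZ B) where
  nonempty := hne.imp fun a ha => ⟨a, ha, natle_refl hS a⟩
  directed := by
    rintro x ⟨a, ha, hax⟩ y ⟨b, hb, hby⟩
    obtain ⟨d, hd, hda, hdb⟩ := hdir a ha b hb
    exact ⟨d, ⟨d, hd, natle_refl hS d⟩, natle_trans hS hda hax, natle_trans hS hdb hby⟩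
  upward := fun _ ⟨a, ha, hax⟩ _ hxy => ⟨a, ha, natle_trans hS hax hxy⟩
  zero_not_mem := fun ⟨a, ha, ha0⟩ => h0 (eq_zero_of_natle_zero hS ha0 ▸ ha)

end InverseSemigroup

section Meet

variable {S : Type*} [Semigroup S] [Zero S] {inv : S → S} {meet : S → S → S}

theorem mul_eq_zero_of_meet_eq_zero (hS : IsInvSemigroupZ S inv)
    (hM : ∀ s t : S, IsMeetZ {s, t} (meet s t)) {x z f : S} (hz : IsIdemE z) (hf : IsIdemE f)
    (hzx : natle z x) (hxf : meet x f = 0) : z * f = 0 :=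
  eq_zero_of_natle_zero hS <| hxf ▸ natle_meet hM
    (natle_trans hS (natle_mul_right z hf) hzx) (mul_natle_of_isIdemE hS hz hf)

/-- Otherwise the meets `x ∧ e`, `x ∈ X`, generate a filter containing `X` and `e`. -/
theorem IsUltraZ.exists_meet_eq_zero (hS : IsInvSemigroupZ S inv)
    (hM : ∀ s t : S, IsMeetZ {s, t} (meet s t)) {X : Set S} (hX : IsUltraZ X) {e : S}
    (he : e ∉ X) : ∃ x ∈ X, meet x e = 0 := by
  by_contra! hne
  have hXB : X ⊆ upsetZ ((meet · e) '' X) :=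
    fun x hx => ⟨meet x e, ⟨x, hx, rfl⟩, meet_natle_left hM x e⟩
  have hB : IsFilterZ (upsetZ ((meet · e) '' X)) := by
    refine isFilterZ_upsetZ hS (hX.1.nonempty.image _) ?_ fun ⟨x, hx, hx0⟩ => hne x hx hx0
    rintro _ ⟨x, hx, rfl⟩ _ ⟨y, hy, rfl⟩
    obtain ⟨z, hz, hzx, hzy⟩ := hX.1.directed x hx y hy
    exact ⟨meet z e, ⟨z, hz, rfl⟩,
      natle_meet hM (natle_trans hS (meet_natle_left hM z e) hzx) (meet_natle_right hM z e),
      natle_meet hM (natle_trans hS (meet_natle_left hM z e) hzy) (meet_natle_right hM z e)⟩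
  obtain ⟨x, hx⟩ := hX.1.nonempty
  exact he (hX.2 _ hB hXB ▸ ⟨meet x e, ⟨x, hx, rfl⟩, meet_natle_right hM x e⟩)

end Meet

section GradedBoolean

variable {S Γ : Type*} [Semigroup S] [Zero S] [Group Γ] {inv : S → S} {deg : S → Γ}
  {meet : S → S → S}

/-- If `f, g ∉ X`, some `z ∈ X` below `e` has `zf = zg = 0`, and then `z = ze = zf ∨ zg = 0`. -/
theorem IsUltraZ.mem_or_mem_of_isJoinZ (hB : IsGradedBooleanZ inv deg meet) {X : Set S}
    (hX : IsUltraZ X) {e f g : S} (he : IsIdemE e) (hf : IsIdemE f) (hg : IsIdemE g)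
    (hj : IsJoinZ {f, g} e) (heX : e ∈ X) : f ∈ X ∨ g ∈ X := by
  have hS := hB.invSemi
  by_contra! hfg
  obtain ⟨x, hx, hxf⟩ := hX.exists_meet_eq_zero hS hB.meet_is hfg.1
  obtain ⟨y, hy, hyg⟩ := hX.exists_meet_eq_zero hS hB.meet_is hfg.2
  obtain ⟨w, hw, hwx, hwy⟩ := hX.1.directed x hx y hy
  obtain ⟨z, hz, hzw, hze⟩ := hX.1.directed w hw e heX
  have hzi : IsIdemE z := isIdemE_of_natle hS he hze
  have hzf : z * f = 0 :=
    mul_eq_zero_of_meet_eq_zero hS hB.meet_is hzi hf (natle_trans hS hzw hwx) hxf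
  have hzg : z * g = 0 :=
    mul_eq_zero_of_meet_eq_zero hS hB.meet_is hzi hg (natle_trans hS hzw hwy) hyg
  have hjz := hB.distrib z f g e hzi hf hg hj
  rw [hzf, hzg, Set.pair_eq_singleton] at hjz
  have hz0 : z * e = 0 := eq_zero_of_natle_zero hS <| hjz.2 0 fun a ha => ha ▸ natle_refl hS 0
  rw [mul_comm_of_isIdemE hS hzi he, mul_eq_of_natle he hze] at hz0
  exact hX.1.zero_not_mem (hz0 ▸ hz)

theorem IsUltraZ.mem_iff_not_mem_of_isJoinZ (hB : IsGradedBooleanZ inv deg meet) {X : Set S}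
    (hX : IsUltraZ X) {u v c : S} (hu : IsIdemE u) (hv : IsIdemE v) (hc : IsIdemE c)
    (hcu : natle c u) (hc0 : u * v * c = 0) (hj : IsJoinZ {u * v, c} u) (huX : u ∈ X) :
    v ∈ X ↔ c ∉ X := by
  have hS := hB.invSemi
  have huv := isIdemE_mul hS hu hv
  refine ⟨fun hvX hcX => hX.1.zero_not_mem ?_, fun hcX => ?_⟩
  · have hcv : c * v = 0 := by
      rw [← mul_eq_of_natle hu hcu, mul_comm_of_isIdemE hS hu hc, mul_assoc,
        mul_comm_of_isIdemE hS hc huv, hc0]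
    exact hcv ▸ hX.1.mul_mem hS hc hv hcX hvX
  · obtain huvX | hcX' := hX.mem_or_mem_of_isJoinZ hB hu huv hc hj huX
    · exact hX.1.upward _ huvX v (mul_natle_of_isIdemE hS hu hv)
    · exact absurd hcX' hcX

end GradedBoolean

section ListProduct

variable {S I : Type*} [Semigroup S]

def listProdMul (c : I → S) (u : S) : List I → S
  | [] => u
  | i :: l => c i * listProdMul c u l

variable [Zero S] {inv : S → S} {c : I → S} {u : S}

theorem isIdemE_listProdMul (hS : IsInvSemigroupZ S inv) (hc : ∀ i, IsIdemE (c i))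
    (hu : IsIdemE u) : ∀ l : List I, IsIdemE (listProdMul c u l)
  | [] => hu
  | i :: l => isIdemE_mul hS (hc i) (isIdemE_listProdMul hS hc hu l)

theorem natle_listProdMul_iff (hS : IsInvSemigroupZ S inv) (hc : ∀ i, IsIdemE (c i))
    (hu : IsIdemE u) {z : S} :
    ∀ l : List I, natle z (listProdMul c u l) ↔ natle z u ∧ ∀ i ∈ l, natle z (c i)
  | [] => by simp [listProdMul]
  | i :: l => by
    rw [listProdMul, natle_mul_iff hS (hc i) (isIdemE_listProdMul hS hc hu l),
      natle_listProdMul_iff hS hc hu l, List.forall_mem_cons]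
    tauto

theorem IsFilterZ.listProdMul_mem_iff (hS : IsInvSemigroupZ S inv) {X : Set S}
    (hX : IsFilterZ X) (hc : ∀ i, IsIdemE (c i)) (hu : IsIdemE u) :
    ∀ l : List I, listProdMul c u l ∈ X ↔ u ∈ X ∧ ∀ i ∈ l, c i ∈ X
  | [] => by simp [listProdMul]
  | i :: l => by
    rw [listProdMul, hX.mul_mem_iff hS (hc i) (isIdemE_listProdMul hS hc hu l),
      hX.listProdMul_mem_iff hS hc hu l, List.forall_mem_cons]
    tauto

theorem exists_isUltraZ_forall_mem (hS : IsInvSemigroupZ S inv) (hc : ∀ i, IsIdemE (c i))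
    (hu : IsIdemE u) (hne : ∀ l, listProdMul c u l ≠ 0) :
    ∃ X : Set S, IsUltraZ X ∧ u ∈ X ∧ ∀ i, c i ∈ X := by
  have hF : IsFilterZ (upsetZ (Set.range (listProdMul c u))) := by
    refine isFilterZ_upsetZ hS ⟨u, [], rfl⟩ ?_ fun ⟨l, hl⟩ => hne l hl
    rintro _ ⟨l₁, rfl⟩ _ ⟨l₂, rfl⟩
    have h := (natle_listProdMul_iff hS hc hu (l₁ ++ l₂)).1
      (natle_refl hS (listProdMul c u (l₁ ++ l₂)))
    exact ⟨_, ⟨l₁ ++ l₂, rfl⟩,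
      (natle_listProdMul_iff hS hc hu l₁).2 ⟨h.1, fun i hi => h.2 i (List.mem_append_left _ hi)⟩,
      (natle_listProdMul_iff hS hc hu l₂).2 ⟨h.1, fun i hi => h.2 i (List.mem_append_right _ hi)⟩⟩
  obtain ⟨X, hX, hFX⟩ := exists_isUltraZ_superset hF
  have hmem : ∀ l, listProdMul c u l ∈ X := fun l => hFX ⟨_, ⟨l, rfl⟩, natle_refl hS _⟩
  exact ⟨X, hX, hmem [], fun i => ((hX.1.listProdMul_mem_iff hS hc hu [i]).1 (hmem [i])).2 i
    (List.mem_singleton_self i)⟩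

end ListProduct

theorem uset_idempotent_compactness
    {S Γ : Type*} [Semigroup S] [Zero S] [Group Γ]
    (inv : S → S) (deg : S → Γ) (meet : S → S → S)
    (hB : IsGradedBooleanZ inv deg meet)
    {I : Type*} (u : S) (v : I → S)
    (hu : IsIdemE u) (hv : ∀ i : I, IsIdemE (v i))
    (h : USetZ u = ⋃ i : I, USetZ (v i)) :
    ∃ J : Finset I, USetZ u = ⋃ i ∈ J, USetZ (v i) := by
  classical
  have hS := hB.invSemi
  choose c hc hcu hc0 hcj using fun i =>
    hB.complemented u (u * v i) hu (isIdemE_mul hS hu (hv i)) (natle_mul_right u (hv i))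
  have hvc : ∀ X ∈ USetZ u, ∀ i, v i ∈ X ↔ c i ∉ X := fun X hX i =>
    hX.1.mem_iff_not_mem_of_isJoinZ hB hu (hv i) (hc i) (hcu i) (hc0 i) (hcj i) hX.2
  by_cases hne : ∀ l, listProdMul c u l ≠ 0
  · obtain ⟨X, hX, huX, hcX⟩ := exists_isUltraZ_forall_mem hS hc hu hne
    obtain ⟨i, hi⟩ := Set.mem_iUnion.1 (h ▸ ⟨hX, huX⟩ : X ∈ ⋃ i, USetZ (v i))
    exact absurd (hcX i) ((hvc X ⟨hX, huX⟩ i).1 hi.2)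
  push Not at hne
  obtain ⟨l, hl⟩ := hne
  refine ⟨l.toFinset, subset_antisymm (fun X hX => ?_) ?_⟩
  · have hP : listProdMul c u l ∉ X := hl ▸ hX.1.1.zero_not_mem
    rw [hX.1.1.listProdMul_mem_iff hS hc hu] at hP
    push Not at hP
    obtain ⟨i, hil, hciX⟩ := hP hX.2
    exact Set.mem_biUnion (List.mem_toFinset.2 hil) ⟨hX.1, (hvc X hX i).2 hciX⟩
  · rw [h]
    exact Set.iUnion₂_subset fun i _ => Set.subset_iUnion (fun i => USetZ (v i)) i
end
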